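/- For N = 2 and m₀(z) = (1+z³)/√2, the function h(e^{-iω}) = (1/9)(1 + 2cos ω)² satisfies R(h) = h, where R is the Ruelle operator (Rf)(z) = (1/2) ∑_{w²=z} |m₀(w)|² f(w). -/

import Mathlib

open MeasureTheory Filter Set
open scoped Real ENNReal

/-- The Ruelle transfer operator of order `N` with filter `m₀`, on complex
functions on the circle (encoded as `1`-periodic functions on `ℝ`):
`(Rf)(x) = (1/N) ∑_{k<N} |m₀((x+k)/N)|² f((x+k)/N)`. -/
noncomputable def ruelle (N : ℕ) (m₀ : ℝ → ℂ) (f : ℝ → ℂ) : ℝ → ℂ :=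
  fun x => (N : ℂ)⁻¹ *
    ∑ k ∈ Finset.range N, (‖m₀ ((x + k) / N)‖ : ℂ) ^ 2 * f ((x + k) / N)

/-- The Ruelle transfer operator acting on real-valued functions. -/
noncomputable def ruelleR (N : ℕ) (m₀ : ℝ → ℂ) (h : ℝ → ℝ) : ℝ → ℝ :=
  fun x => (N : ℝ)⁻¹ *
    ∑ k ∈ Finset.range N, ‖m₀ ((x + k) / N)‖ ^ 2 * h ((x + k) / N)

/-- The filter `m₀(z) = (1 + z³)/√2`, with `z = e^{2πix}`. -/
noncomputable def m3 : ℝ → ℂ :=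
  fun x => (1 + Complex.exp (2 * (Real.pi : ℂ) * Complex.I * (3 * (x : ℂ))))
    / (Real.sqrt 2 : ℂ)

/-- The harmonic function `h(e^{-iω}) = (1/9)(1 + 2cos ω)²`. -/
noncomputable def hfun : ℝ → ℝ :=
  fun x => (1/9) * (1 + 2 * Real.cos (2 * Real.pi * x)) ^ 2

/-!
Writing `P(z) = (1 + z + z²)/3`, we have `h = |P|²` and `1 + z³ = (1 + z) P(z²) / P(z)`,
so `|m₀(w)|² h(w) = |(1 + w)/√2|² h(w²)`. For both square roots `w` of `z` the factor
`h(w²) = h(z)` comes out of the sum, leaving `(1/2) ∑_{w² = z} |(1 + w)/√2|² = 1`,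
the quadrature mirror identity of the Haar filter.
-/

theorem ruelleR_two_eq_self_of_factor {m₀ : ℝ → ℂ} {h g : ℝ → ℝ}
    (h_periodic : Function.Periodic h 1) (hg : ∀ y, g y + g (y + 1 / 2) = 2)
    (hfactor : ∀ y, ‖m₀ y‖ ^ 2 * h y = g y * h (2 * y)) (x : ℝ) :
    ruelleR 2 m₀ h x = h x := by
  have hsplit : (x + 1) / 2 = x / 2 + 1 / 2 := by ring
  have hdouble : 2 * (x / 2) = x := by ring
  have hdouble' : 2 * (x / 2 + 1 / 2) = x + 1 := by ring
  simp only [ruelleR, Finset.sum_range_succ, Finset.sum_range_zero, zero_add,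
    Nat.cast_ofNat, Nat.cast_zero, Nat.cast_one, add_zero]
  rw [hfactor, hfactor, hsplit, hdouble, hdouble', h_periodic x, ← add_mul, hg]
  ring

lemma norm_m3_sq (y : ℝ) : ‖m3 y‖ ^ 2 = 1 + Real.cos (6 * π * y) := by
  have hexp : 2 * (π : ℂ) * Complex.I * (3 * (y : ℂ)) = ((6 * π * y : ℝ) : ℂ) * Complex.I := by
    push_cast; ring
  have hnum : ‖1 + Complex.exp (((6 * π * y : ℝ) : ℂ) * Complex.I)‖ ^ 2
      = 2 + 2 * Real.cos (6 * π * y) := by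
    rw [Complex.sq_norm, Complex.normSq_apply, Complex.add_re, Complex.add_im, Complex.one_re,
      Complex.one_im, Complex.exp_ofReal_mul_I_re, Complex.exp_ofReal_mul_I_im]
    nlinarith [Real.sin_sq_add_cos_sq (6 * π * y)]
  have hden : ‖((√2 : ℝ) : ℂ)‖ ^ 2 = 2 := by
    rw [Complex.norm_real, Real.norm_eq_abs, sq_abs, Real.sq_sqrt zero_le_two]
  rw [m3, hexp, norm_div, div_pow, hnum, hden]
  ring

lemma hfun_periodic : Function.Periodic hfun 1 := by
  intro x
  simp only [hfun, mul_add, mul_one, Real.cos_add_two_pi]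

lemma norm_m3_sq_mul_hfun (y : ℝ) :
    ‖m3 y‖ ^ 2 * hfun y = (1 + Real.cos (2 * π * y)) * hfun (2 * y) := by
  have h3 : 6 * π * y = 3 * (2 * π * y) := by ring
  have h2 : 2 * π * (2 * y) = 2 * (2 * π * y) := by ring
  rw [norm_m3_sq, hfun, hfun, h3, h2, Real.cos_three_mul, Real.cos_two_mul]
  ring

lemma one_add_cos_add_one_add_cos_add_half (y : ℝ) :
    (1 + Real.cos (2 * π * y)) + (1 + Real.cos (2 * π * (y + 1 / 2))) = 2 := by
  rw [show 2 * π * (y + 1 / 2) = 2 * π * y + π by ring, Real.cos_add_pi]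
  ring

/-- for `N = 2`, `m₀(z) = (1+z³)/√2`, the function
`h(e^{-iω}) = (1/9)(1+2cos ω)²` satisfies `R(h) = h`. -/
theorem stmt10 : ∀ x : ℝ, ruelleR 2 m3 hfun x = hfun x :=
  ruelleR_two_eq_self_of_factor hfun_periodic one_add_cos_add_one_add_cos_add_half
    norm_m3_sq_mul_hfun
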